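/- arXiv:2509.13102 — 4 statements merged into one kernel-verified Lean document; each statement's English description precedes it below -/
import Mathlib

section
/- Let ρ > 0, γ > 0, σ > 0, β > 0, ‖c‖ > 0, ‖A‖ > 0. Define T₂(r) := (1/‖A‖) · log(1 + (σ·r + β)/(‖c‖·(ρ·r + γ))). Then inf_{r ≥ 0} T₂(r) > 0; i.e., the inter-event time lower bound from the magnitude-based triggering rule is uniformly bounded away from zero over all sampled state norms r ≥ 0. -/
open Real

/-! The ratio `(σ r + β) / (‖c‖ (ρ r + γ))` is a mediant of `β / (‖c‖ γ)` and `σ / (‖c‖ ρ)`, so it never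
drops below the smaller of the two; by monotonicity of `log`, `T₂` is then bounded below by
`log (1 + min (σ / (‖c‖ ρ)) (β / (‖c‖ γ))) / ‖A‖ > 0`. -/

theorem min_div_le_add_div_add {a b c d : ℝ} (hc : 0 < c) (hd : 0 < d) {r : ℝ} (hr : 0 ≤ r) :
    min (a / c) (b / d) ≤ (a * r + b) / (c * r + d) := by
  set m := min (a / c) (b / d)
  have hmc : m * c ≤ a := (le_div_iff₀ hc).mp (min_le_left _ _)
  have hmd : m * d ≤ b := (le_div_iff₀ hd).mp (min_le_right _ _)
  rw [le_div_iff₀ (by positivity)]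
  calc m * (c * r + d) = m * c * r + m * d := by ring
    _ ≤ a * r + b := add_le_add (mul_le_mul_of_nonneg_right hmc hr) hmd

/-- The inter-event time lower bound from the magnitude-based triggering rule is
uniformly bounded away from zero over all sampled state norms `r ≥ 0`. -/
theorem stmt_3 (ρ γ σ β nc nA : ℝ) (hρ : 0 < ρ) (hγ : 0 < γ) (hσ : 0 < σ)
    (hβ : 0 < β) (hc : 0 < nc) (hA : 0 < nA)
    (T₂ : ℝ → ℝ)
    (hT₂ : ∀ r : ℝ, T₂ r = (1 / nA) * Real.log (1 + (σ * r + β) / (nc * (ρ * r + γ)))) :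
    ∃ ε : ℝ, 0 < ε ∧ ∀ r : ℝ, 0 ≤ r → ε ≤ T₂ r := by
  set m := min (σ / (nc * ρ)) (β / (nc * γ))
  have hm : 0 < m := lt_min (by positivity) (by positivity)
  refine ⟨1 / nA * log (1 + m), by have := log_pos (lt_add_of_pos_right 1 hm); positivity,
    fun r hr => ?_⟩
  have hratio : m ≤ (σ * r + β) / (nc * (ρ * r + γ)) := by
    rw [mul_add, ← mul_assoc]
    exact min_div_le_add_div_add (mul_pos hc hρ) (mul_pos hc hγ) hr
  rw [hT₂ r]
  gcongr
end

section
/- Let x : [t_i, t_{i+1}) → ℝⁿ, and define the error e(t) = x(t_i) - x(t). If ‖e(t)‖ < sin(θ/(2n)) · ‖x(t_i)‖ for some θ ∈ (0, π) and positive integer n, and x(t_i) ≠ 0 and x(t) ≠ 0, then the cosine of the angle between x(t) and x(t_i) satisfies (x(t)ᵀ x(t_i))/(‖x(t)‖·‖x(t_i)‖) > cos(θ/(2n)) — i.e., the angular deviation of x(t) from x(t_i) is less than θ/(2n). -/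
/-!
Expanding `‖a - b‖² < sin² α ‖a‖²` with `sin² α = 1 - cos² α` gives
`‖b‖² + cos² α ‖a‖² < 2 ⟪a, b⟫`, and the left side is at least `2 cos α ‖a‖ ‖b‖` by AM-GM.
-/

open Real
open scoped RealInnerProductSpace

lemma ne_zero_of_norm_sub_lt_sin_mul_norm {E : Type*} [SeminormedAddCommGroup E] {a b : E} {α : ℝ}
    (h : ‖a - b‖ < sin α * ‖a‖) : b ≠ 0 := by
  rintro rfl
  rw [sub_zero] at h
  nlinarith [sin_le_one α, norm_nonneg a]

section

variable {E : Type*} [NormedAddCommGroup E] [InnerProductSpace ℝ E] {a b : E} {α : ℝ}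

lemma sq_norm_add_sq_cos_mul_lt_two_mul_inner (h : ‖a - b‖ < sin α * ‖a‖) :
    ‖b‖ ^ 2 + (cos α * ‖a‖) ^ 2 < 2 * ⟪a, b⟫ := by
  have hsq : ‖a - b‖ ^ 2 < (sin α * ‖a‖) ^ 2 := by
    gcongr
  rw [norm_sub_sq_real] at hsq
  nlinarith [sin_sq_add_cos_sq α]

theorem cos_lt_inner_div_norm_mul_norm_of_norm_sub_lt (h : ‖a - b‖ < sin α * ‖a‖) :
    cos α < ⟪b, a⟫ / (‖b‖ * ‖a‖) := by
  have ha : 0 < ‖a‖ := by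
    nlinarith [norm_nonneg (a - b), norm_nonneg a, sin_le_one α]
  have hb : 0 < ‖b‖ := norm_pos_iff.mpr (ne_zero_of_norm_sub_lt_sin_mul_norm h)
  rw [lt_div_iff₀ (by positivity), real_inner_comm]
  nlinarith [sq_norm_add_sq_cos_mul_lt_two_mul_inner h, sq_nonneg (‖b‖ - cos α * ‖a‖)]

end

theorem stmt_7_general (N : ℕ) (θ : ℝ) (n : ℕ)
    (ti : ℝ) (x : ℝ → EuclideanSpace ℝ (Fin N)) (t : ℝ)
    (he : ‖x ti - x t‖ < Real.sin (θ / (2 * n)) * ‖x ti‖) :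
    Real.cos (θ / (2 * n)) < ⟪x t, x ti⟫ / (‖x t‖ * ‖x ti‖) :=
  cos_lt_inner_div_norm_mul_norm_of_norm_sub_lt he

/-- If the sampling error is smaller than `sin(θ/(2n))` times the sampled state norm,
then the angular deviation of `x(t)` from `x(t_i)` is less than `θ/(2n)`. -/
theorem stmt_7 (N : ℕ) (θ : ℝ) (n : ℕ) (hθ : θ ∈ Set.Ioo (0:ℝ) π) (hn : 0 < n)
    (ti ti1 : ℝ) (x : ℝ → EuclideanSpace ℝ (Fin N)) (t : ℝ)
    (ht : t ∈ Set.Ico ti ti1)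
    (hxi : x ti ≠ 0) (hxt : x t ≠ 0)
    (he : ‖x ti - x t‖ < Real.sin (θ / (2 * n)) * ‖x ti‖) :
    Real.cos (θ / (2 * n)) < ⟪x t, x ti⟫ / (‖x t‖ * ‖x ti‖) :=
  stmt_7_general N θ n ti x t he
end

section
/- Let x solve ẋ = Ax + B(u + d) on [t_i, t_{i+1}) with constant input u = -(cᵀB)⁻¹(cᵀA x(t_i) + K·sign(s(t_i))) and |d(t)| ≤ d_max, where cᵀB ≠ 0. Then the error e(t) = x(t_i) - x(t) satisfies, for almost every t, d/dt‖e(t)‖ ≤ ‖A‖‖e(t)‖ + ρ‖x(t_i)‖ + γ, where ρ = ‖A - B(cᵀB)⁻¹cᵀA‖ and γ = ‖B(cᵀB)⁻¹‖·|K| + ‖B‖·d_max. -/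
/-!
Along the trajectory `ė = -ẋ`, so wherever `‖e‖` is differentiable its derivative is at most
`‖ẋ(t)‖`. Writing `A x(t) = A x(tᵢ) - A e(t)`, the equivalent-control part of `u` combines with
`A x(tᵢ)` into `(A - B (cᵀB)⁻¹ cᵀA) x(tᵢ)`, and what is left of `ẋ(t)` is the switching term
`-(cᵀB)⁻¹ K sign(s(tᵢ)) B` and the disturbance `d(t) B`; the triangle inequality finishes.
-/

open Real Filter
open scoped RealInnerProductSpace Topology

theorem HasDerivAt.le_norm_of_hasDerivAt_norm {E : Type*} [NormedAddCommGroup E]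
    [NormedSpace ℝ E] {f : ℝ → E} {f' : E} {t der : ℝ} (hf : HasDerivAt f f' t)
    (hnorm : HasDerivAt (fun τ => ‖f τ‖) der t) : der ≤ ‖f'‖ := by
  refine le_of_forall_gt_imp_ge_of_dense fun r hr => ?_
  have hslope : Tendsto (slope (fun τ => ‖f τ‖) t) (𝓝[>] t) (𝓝 der) :=
    (hasDerivAt_iff_tendsto_slope.mp hnorm).mono_left (nhdsWithin_mono _ fun _ h => h.ne')
  refine le_of_tendsto_of_frequently hslope
    ((hf.hasDerivWithinAt.liminf_right_slope_norm_le hr).mono fun z hz => ?_)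
  rw [slope_def_module, smul_eq_mul]
  exact hz.le

theorem Real.abs_sign_le_one (r : ℝ) : |Real.sign r| ≤ 1 := by
  rcases Real.sign_apply_eq r with h | h | h <;> simp [h]

theorem norm_closedLoop_field_le {E : Type*} [NormedAddCommGroup E] [InnerProductSpace ℝ E]
    (A : E →L[ℝ] E) (B c xi y : E) (K s δ dmax : ℝ) (hs : |s| ≤ 1) (hδ : |δ| ≤ dmax) :
    ‖A y + (-(⟪c, B⟫)⁻¹ * (⟪c, A xi⟫ + K * s) + δ) • B‖ ≤
      ‖A‖ * ‖xi - y‖ + ‖A - (⟪c, B⟫)⁻¹ • (((innerSL ℝ c).comp A).smulRight B)‖ * ‖xi‖ +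
        (‖(⟪c, B⟫)⁻¹ • B‖ * |K| + ‖B‖ * dmax) := by
  set M := A - (⟪c, B⟫)⁻¹ • (((innerSL ℝ c).comp A).smulRight B)
  have hM : M xi = A xi - (⟪c, B⟫)⁻¹ • ⟪c, A xi⟫ • B := by simp [M]
  have hsplit : A y + (-(⟪c, B⟫)⁻¹ * (⟪c, A xi⟫ + K * s) + δ) • B =
      -A (xi - y) + M xi + (-(K * s)) • ((⟪c, B⟫)⁻¹ • B) + δ • B := by
    rw [hM, map_sub]
    module
  have hswitch : ‖(-(K * s)) • ((⟪c, B⟫)⁻¹ • B)‖ ≤ ‖(⟪c, B⟫)⁻¹ • B‖ * |K| := by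
    rw [norm_smul, norm_neg, norm_mul, Real.norm_eq_abs, Real.norm_eq_abs, mul_comm]
    exact mul_le_mul_of_nonneg_left (mul_le_of_le_one_right (abs_nonneg K) hs) (norm_nonneg _)
  have hdisturbance : ‖δ • B‖ ≤ ‖B‖ * dmax := by
    rw [norm_smul, Real.norm_eq_abs, mul_comm]
    exact mul_le_mul_of_nonneg_left hδ (norm_nonneg B)
  calc _ ≤ ‖-A (xi - y)‖ + ‖M xi‖ + ‖(-(K * s)) • ((⟪c, B⟫)⁻¹ • B)‖ + ‖δ • B‖ :=
        hsplit ▸ norm_add₄_le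
    _ ≤ ‖A‖ * ‖xi - y‖ + ‖M‖ * ‖xi‖ + ‖(⟪c, B⟫)⁻¹ • B‖ * |K| + ‖B‖ * dmax := by
        rw [norm_neg]
        gcongr
        exacts [A.le_opNorm _, M.le_opNorm _]
    _ = _ := by ring

theorem stmt_13_general (N : ℕ) (A : EuclideanSpace ℝ (Fin N) →L[ℝ] EuclideanSpace ℝ (Fin N))
    (B c : EuclideanSpace ℝ (Fin N))
    (K dmax ti ti1 : ℝ)
    (d : ℝ → ℝ) (hd : ∀ t : ℝ, |d t| ≤ dmax)
    (x : ℝ → EuclideanSpace ℝ (Fin N))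
    (u : ℝ) (hu : u = -(⟪c, B⟫)⁻¹ * (⟪c, A (x ti)⟫ + K * Real.sign (⟪c, x ti⟫)))
    (hx : ∀ t ∈ Set.Ico ti ti1, HasDerivAt x (A (x t) + (u + d t) • B) t) :
    ∀ t ∈ Set.Ioo ti ti1, ∀ der : ℝ,
      HasDerivAt (fun τ => ‖x ti - x τ‖) der t →
      der ≤ ‖A‖ * ‖x ti - x t‖ +
        ‖A - (⟪c, B⟫)⁻¹ • (((innerSL ℝ c).comp A).smulRight B)‖ * ‖x ti‖ +
        (‖(⟪c, B⟫)⁻¹ • B‖ * |K| + ‖B‖ * dmax) := by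
  intro t ht der hder
  have herr :=
    ((hx t (Set.Ioo_subset_Ico_self ht)).const_sub (x ti)).le_norm_of_hasDerivAt_norm hder
  rw [norm_neg, hu] at herr
  exact herr.trans
    (norm_closedLoop_field_le A B c _ _ K _ _ dmax (Real.abs_sign_le_one _) (hd t))

/-- Growth bound on the sampling error under the zero-order-hold event-triggered SMC law:
`d/dt‖e(t)‖ ≤ ‖A‖‖e(t)‖ + ρ‖x(t_i)‖ + γ`. -/
theorem stmt_13 (N : ℕ) (A : EuclideanSpace ℝ (Fin N) →L[ℝ] EuclideanSpace ℝ (Fin N))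
    (B c : EuclideanSpace ℝ (Fin N)) (hcB : ⟪c, B⟫ ≠ 0)
    (K dmax ti ti1 : ℝ) (hdmax : 0 ≤ dmax)
    (d : ℝ → ℝ) (hd : ∀ t : ℝ, |d t| ≤ dmax)
    (x : ℝ → EuclideanSpace ℝ (Fin N))
    (u : ℝ) (hu : u = -(⟪c, B⟫)⁻¹ * (⟪c, A (x ti)⟫ + K * Real.sign (⟪c, x ti⟫)))
    (hx : ∀ t ∈ Set.Ico ti ti1, HasDerivAt x (A (x t) + (u + d t) • B) t) :
    ∀ t ∈ Set.Ioo ti ti1, ∀ der : ℝ,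
      HasDerivAt (fun τ => ‖x ti - x τ‖) der t →
      der ≤ ‖A‖ * ‖x ti - x t‖ +
        ‖A - (⟪c, B⟫)⁻¹ • (((innerSL ℝ c).comp A).smulRight B)‖ * ‖x ti‖ +
        (‖(⟪c, B⟫)⁻¹ • B‖ * |K| + ‖B‖ * dmax) :=
  stmt_13_general N A B c K dmax ti ti1 d hd x u hu hx
end

section
/- Let s : [t₀, T] → ℝ be absolutely continuous with s(t₀) > 0 and ṡ(t) ≤ -ξ < 0 almost everywhere on the interval where s > 0. If additionally the sign condition sign(s(t_i)) = sign(s(t)) holds on each sampling interval, then s is strictly decreasing while positive and reaches 0 at some t₁* ≤ t₀ + s(t₀)/ξ, and the same conclusion holds symmetrically for s(t₀) < 0 with ṡ ≥ ξ. -/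
/-!
While `s` is positive its slope is at most `-ξ`, so by the mean value theorem
`s t₂ - s t₁ ≤ -ξ (t₂ - t₁)` on every interval where `s` stays positive. If `s` had no zero on
`[t₀, t₀ + s t₀ / ξ]` it would stay positive there by the intermediate value theorem, and the
bound would give `s (t₀ + s t₀ / ξ) ≤ 0`. The case `s t₀ < 0` is the same argument for `-s`.
-/

open Set

theorem sub_le_mul_sub_of_hasDerivAt_le {s : ℝ → ℝ} {a b C : ℝ} (hab : a ≤ b)
    (hc : ContinuousOn s (Icc a b)) (hd : ∀ t ∈ Ioo a b, ∃ d ≤ C, HasDerivAt s d t) :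
    s b - s a ≤ C * (b - a) := by
  refine (convex_Icc a b).image_sub_le_mul_sub_of_deriv_le hc ?_ ?_ a ⟨le_rfl, hab⟩ b
    ⟨hab, le_rfl⟩ hab
  · rw [interior_Icc]
    intro t ht
    obtain ⟨d, -, hs⟩ := hd t ht
    exact hs.differentiableAt.differentiableWithinAt
  · rw [interior_Icc]
    intro t ht
    obtain ⟨d, hdC, hs⟩ := hd t ht
    rwa [hs.deriv]

section Reaching

variable {t₀ T ξ : ℝ} {s : ℝ → ℝ}

theorem strictAnti_of_pos_of_hasDerivAt_le (hξ : 0 < ξ) (hc : ContinuousOn s (Icc t₀ T))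
    (hd : ∀ t ∈ Ioo t₀ T, 0 < s t → ∃ d ≤ -ξ, HasDerivAt s d t)
    {t₁ t₂ : ℝ} (ht₁ : t₁ ∈ Icc t₀ T) (ht₂ : t₂ ∈ Icc t₀ T) (h₁₂ : t₁ < t₂)
    (hpos : ∀ τ ∈ Icc t₁ t₂, 0 < s τ) : s t₂ < s t₁ := by
  have hsub : Icc t₁ t₂ ⊆ Icc t₀ T := Icc_subset_Icc ht₁.1 ht₂.2
  have hslope := sub_le_mul_sub_of_hasDerivAt_le h₁₂.le (hc.mono hsub) fun t ht =>
    hd t (Ioo_subset_Ioo ht₁.1 ht₂.2 ht) (hpos t ⟨ht.1.le, ht.2.le⟩)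
  linarith [mul_pos hξ (sub_pos.mpr h₁₂)]

theorem exists_zero_of_pos_of_hasDerivAt_le (hξ : 0 < ξ) (hc : ContinuousOn s (Icc t₀ T))
    (h₀ : 0 < s t₀) (hT : t₀ + s t₀ / ξ ≤ T)
    (hd : ∀ t ∈ Ioo t₀ T, 0 < s t → ∃ d ≤ -ξ, HasDerivAt s d t) :
    ∃ t₁ ∈ Icc t₀ (t₀ + s t₀ / ξ), s t₁ = 0 := by
  set τ := t₀ + s t₀ / ξ
  have hτ : ξ * (τ - t₀) = s t₀ := by simp only [τ]; field_simp; ring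
  have ht₀τ : t₀ ≤ τ := le_add_of_nonneg_right (div_pos h₀ hξ).le
  have hsub : Icc t₀ τ ⊆ Icc t₀ T := Icc_subset_Icc le_rfl hT
  by_cases hpos : ∀ t ∈ Icc t₀ τ, 0 < s t
  · have hslope := sub_le_mul_sub_of_hasDerivAt_le ht₀τ (hc.mono hsub) fun t ht =>
      hd t ⟨ht.1, ht.2.trans_le hT⟩ (hpos t ⟨ht.1.le, ht.2.le⟩)
    linarith [hpos τ ⟨ht₀τ, le_rfl⟩]
  · push Not at hpos
    obtain ⟨t, ht, hst⟩ := hpos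
    obtain ⟨c, hc', hsc⟩ := intermediate_value_Icc' ht.1
      (hc.mono (Icc_subset_Icc le_rfl (hsub ht).2)) ⟨hst, h₀.le⟩
    exact ⟨c, ⟨hc'.1, hc'.2.trans ht.2⟩, hsc⟩

end Reaching

theorem stmt_17_general (t₀ T ξ : ℝ) (hξ : 0 < ξ) :
    (∀ s : ℝ → ℝ, ContinuousOn s (Set.Icc t₀ T) → 0 < s t₀ →
      t₀ + s t₀ / ξ ≤ T →
      (∀ t ∈ Set.Ioo t₀ T, 0 < s t →
        ∃ d : ℝ, d ≤ -ξ ∧ HasDerivAt s d t) →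
      ((∀ t1 ∈ Set.Icc t₀ T, ∀ t2 ∈ Set.Icc t₀ T, t1 < t2 →
          (∀ τ ∈ Set.Icc t1 t2, 0 < s τ) → s t2 < s t1) ∧
        ∃ t₁ ∈ Set.Icc t₀ (t₀ + s t₀ / ξ), s t₁ = 0)) ∧
    (∀ s : ℝ → ℝ, ContinuousOn s (Set.Icc t₀ T) → s t₀ < 0 →
      t₀ + (-s t₀) / ξ ≤ T →
      (∀ t ∈ Set.Ioo t₀ T, s t < 0 →
        ∃ d : ℝ, ξ ≤ d ∧ HasDerivAt s d t) →
      ((∀ t1 ∈ Set.Icc t₀ T, ∀ t2 ∈ Set.Icc t₀ T, t1 < t2 →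
          (∀ τ ∈ Set.Icc t1 t2, s τ < 0) → s t1 < s t2) ∧
        ∃ t₁ ∈ Set.Icc t₀ (t₀ + (-s t₀) / ξ), s t₁ = 0)) := by
  refine ⟨fun s hc h₀ hT hd => ⟨fun t₁ ht₁ t₂ ht₂ h₁₂ hpos =>
    strictAnti_of_pos_of_hasDerivAt_le hξ hc hd ht₁ ht₂ h₁₂ hpos,
    exists_zero_of_pos_of_hasDerivAt_le hξ hc h₀ hT hd⟩, fun s hc h₀ hT hd => ?_⟩
  have hd' : ∀ t ∈ Ioo t₀ T, 0 < -s t → ∃ d ≤ -ξ, HasDerivAt (fun t => -s t) d t := by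
    intro t ht hneg
    obtain ⟨d, hξd, hs⟩ := hd t ht (neg_pos.mp hneg)
    exact ⟨-d, neg_le_neg hξd, hs.neg⟩
  refine ⟨fun t₁ ht₁ t₂ ht₂ h₁₂ hneg => neg_lt_neg_iff.mp ?_, ?_⟩
  · exact strictAnti_of_pos_of_hasDerivAt_le hξ hc.neg hd' ht₁ ht₂ h₁₂
      fun τ hτ => neg_pos.mpr (hneg τ hτ)
  · obtain ⟨t₁, ht₁, hz⟩ :=
      exists_zero_of_pos_of_hasDerivAt_le hξ hc.neg (neg_pos.mpr h₀) hT hd'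
    exact ⟨t₁, ht₁, neg_eq_zero.mp hz⟩

/-- Reaching-phase conclusion: an absolutely continuous sliding variable with
`ṡ ≤ -ξ` while positive is strictly decreasing while positive and reaches `0` by
`t₀ + s(t₀)/ξ`; symmetrically for `s(t₀) < 0` with `ṡ ≥ ξ`. -/
theorem stmt_17 (t₀ T ξ : ℝ) (hξ : 0 < ξ) (htT : t₀ ≤ T) :
    (∀ s : ℝ → ℝ, ContinuousOn s (Set.Icc t₀ T) → 0 < s t₀ →
      t₀ + s t₀ / ξ ≤ T →
      (∀ t ∈ Set.Ioo t₀ T, 0 < s t →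
        ∃ d : ℝ, d ≤ -ξ ∧ HasDerivAt s d t) →
      ((∀ t1 ∈ Set.Icc t₀ T, ∀ t2 ∈ Set.Icc t₀ T, t1 < t2 →
          (∀ τ ∈ Set.Icc t1 t2, 0 < s τ) → s t2 < s t1) ∧
        ∃ t₁ ∈ Set.Icc t₀ (t₀ + s t₀ / ξ), s t₁ = 0)) ∧
    (∀ s : ℝ → ℝ, ContinuousOn s (Set.Icc t₀ T) → s t₀ < 0 →
      t₀ + (-s t₀) / ξ ≤ T →
      (∀ t ∈ Set.Ioo t₀ T, s t < 0 →
        ∃ d : ℝ, ξ ≤ d ∧ HasDerivAt s d t) →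
      ((∀ t1 ∈ Set.Icc t₀ T, ∀ t2 ∈ Set.Icc t₀ T, t1 < t2 →
          (∀ τ ∈ Set.Icc t1 t2, s τ < 0) → s t1 < s t2) ∧
        ∃ t₁ ∈ Set.Icc t₀ (t₀ + (-s t₀) / ξ), s t₁ = 0)) :=
  stmt_17_general t₀ T ξ hξ
end
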